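/- Let n ≥ 3, K a finite group, H ≤ K containing [K,K], and consider G = G_n(K,H) ≤ K ≀ S_n acting on (ℂ²)ⁿ via a faithful 2-dimensional representation of K and permutation of factors. Let p = (0, 0, p₃, …, p_n) where p₃,…,p_n ∈ ℂ² \ {0} lie in pairwise distinct K-orbits and have trivial K-stabilizers. Then the stabilizer of p in G, acting on the symplectic complement (ℂ²)² of its fixed space, is isomorphic to G₂(K,H) = G(K,H,id). -/

import Mathlib

/-!
Since `[K, K] ≤ H`, the quotient `K ⧸ H` is abelian, and for every `m` the group `G_m(K, H)` is
the kernel of the homomorphism `K ≀ S_m → K ⧸ H` multiplying all base coordinates. Because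
`p₃, …, p_n` are nonzero with free, pairwise distinct `K`-orbits, an element fixes `p` exactly
when it fixes the coordinates `3, …, n` and acts trivially on them, i.e. when it lies in the copy
of `K ≀ S₂` on the first two coordinates. On that copy the product homomorphism of `K ≀ S_n`
restricts to the one of `K ≀ S₂`, so the stabilizer in `G_n(K, H)` is the image of `G₂(K, H)`.
-/

/-- The permutation action of `Equiv.Perm ι` on `ι → K`, by group automorphisms. -/
def permAut (ι K : Type*) [Group K] : Equiv.Perm ι →* MulAut (ι → K) where
  toFun σ := MulEquiv.arrowCongr σ (MulEquiv.refl K)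
  map_one' := rfl
  map_mul' _ _ := rfl

/-- The wreath product `K ≀ Sym(ι) = (ι → K) ⋊ Perm ι`. -/
abbrev WreathProduct (ι K : Type*) [Group K] :=
  SemidirectProduct (ι → K) (Equiv.Perm ι) (permAut ι K)

variable {ι K V : Type*} [Group K] [AddCommGroup V] [Module ℂ V]

/-- The action of `K ≀ Sym(ι)` on `ι`-tuples of vectors, via a representation `ρ` of `K`
and permutation of the factors. -/
def wrSmul (ρ : K →* (V ≃ₗ[ℂ] V)) (w : WreathProduct ι K) (v : ι → V) : ι → V :=
  fun i => ρ (w.left i) (v (w.right⁻¹ i))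

lemma wrSmul_one (ρ : K →* (V ≃ₗ[ℂ] V)) (v : ι → V) : wrSmul ρ 1 v = v := by
  funext i; simp [wrSmul]

lemma wrSmul_mul (ρ : K →* (V ≃ₗ[ℂ] V)) (a b : WreathProduct ι K) (v : ι → V) :
    wrSmul ρ (a * b) v = wrSmul ρ a (wrSmul ρ b v) := by
  funext i
  simp [wrSmul, SemidirectProduct.mul_left, SemidirectProduct.mul_right, permAut,
    MulEquiv.arrowCongr, mul_inv_rev, Equiv.Perm.mul_apply, Equiv.Perm.inv_def]

/-- The stabilizer in `K ≀ Sym(ι)` of a tuple of vectors. -/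
def wrStab (ρ : K →* (V ≃ₗ[ℂ] V)) (p : ι → V) : Subgroup (WreathProduct ι K) where
  carrier := {w | wrSmul ρ w p = p}
  one_mem' := wrSmul_one ρ p
  mul_mem' := by
    intro a b ha hb
    show wrSmul ρ (a * b) p = p
    rw [wrSmul_mul, hb, ha]
  inv_mem' := by
    intro a ha
    show wrSmul ρ a⁻¹ p = p
    conv_lhs => rw [← ha]
    rw [← wrSmul_mul, inv_mul_cancel, wrSmul_one]

lemma permAut_apply (σ : Equiv.Perm ι) (g : ι → K) (i : ι) :
    permAut ι K σ g i = g (σ⁻¹ i) := rfl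

namespace WreathProduct

variable {κ : Type*}

section prodHom

variable [Fintype ι] {A : Type*} [CommMonoid A]

def prodHom (f : K →* A) : WreathProduct ι K →* A where
  toFun w := ∏ i, f (w.left i)
  map_one' := by simp
  map_mul' a b := by
    simp only [SemidirectProduct.mul_left, Pi.mul_apply, map_mul, Finset.prod_mul_distrib,
      permAut_apply]
    congr 1
    exact Equiv.prod_comp a.right⁻¹ fun i => f (b.left i)

lemma prodHom_apply (f : K →* A) (w : WreathProduct ι K) :
    prodHom f w = ∏ i, f (w.left i) := rfl

/-- Every `w` factors as `inl w.left * inr w.right`. -/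
lemma closure_eq_ker_prodHom (f : K →* A) {s : Set (WreathProduct ι K)}
    (hs : ∀ w ∈ s, prodHom f w = 1) (hinr : ∀ σ, SemidirectProduct.inr σ ∈ s)
    (hinl : ∀ g, prodHom f (SemidirectProduct.inl g) = 1 → SemidirectProduct.inl g ∈ s) :
    Subgroup.closure s = (prodHom f).ker := by
  refine le_antisymm ((Subgroup.closure_le _).2 hs) fun w hw => ?_
  have hinl_w : prodHom f (SemidirectProduct.inl w.left) = 1 := by
    simpa [MonoidHom.mem_ker, prodHom_apply] using hw
  rw [← SemidirectProduct.inl_left_mul_inr_right w]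
  exact mul_mem (Subgroup.subset_closure (hinl _ hinl_w)) (Subgroup.subset_closure (hinr _))

end prodHom

section quotient

variable (H : Subgroup K) [H.Normal] [IsMulCommutative (K ⧸ H)]

open scoped IsMulCommutative

lemma prodHom_mk_eq_one_iff {m : ℕ} (w : WreathProduct (Fin m) K) :
    prodHom (QuotientGroup.mk' H) w = 1 ↔ (List.ofFn w.left).prod ∈ H := by
  rw [prodHom_apply, ← QuotientGroup.eq_one_iff, ← QuotientGroup.mk'_apply, map_list_prod,
    List.map_ofFn, List.prod_ofFn]
  rfl

lemma closure_eq_ker_prodHom_mk (m : ℕ) :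
    Subgroup.closure ({w : WreathProduct (Fin m) K | w.left = 1} ∪
      {w | w.right = 1 ∧ ∀ i, w.left i ∈ H} ∪ {w | w.right = 1 ∧ (List.ofFn w.left).prod ∈ H}) =
      (prodHom (QuotientGroup.mk' H)).ker := by
  refine closure_eq_ker_prodHom _ ?_ (fun σ => Or.inl (Or.inl rfl))
    (fun g hg => Or.inr ⟨rfl, (prodHom_mk_eq_one_iff H _).1 hg⟩)
  rintro w (((h : w.left = 1) | ⟨-, h⟩) | ⟨-, h⟩) <;> rw [prodHom_mk_eq_one_iff]
  · exact H.list_prod_mem (by simp [h, H.one_mem])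
  · exact H.list_prod_mem (by simpa [List.forall_mem_ofFn_iff] using h)
  · exact h

lemma closure_eq_ker_prodHom_mk_two :
    Subgroup.closure ({w : WreathProduct (Fin 2) K | w.left = 1} ∪
      {w | w.right = 1 ∧ w.left 0 ∈ H ∧ w.left 1 ∈ H} ∪
        {w | w.right = 1 ∧ w.left 0 * w.left 1 ∈ H}) =
      (prodHom (QuotientGroup.mk' H)).ker := by
  have hprod (w : WreathProduct (Fin 2) K) : (List.ofFn w.left).prod = w.left 0 * w.left 1 := by
    simp
  refine closure_eq_ker_prodHom _ ?_ (fun σ => Or.inl (Or.inl rfl))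
    (fun g hg => Or.inr ⟨rfl, hprod _ ▸ (prodHom_mk_eq_one_iff H _).1 hg⟩)
  rintro w (((h : w.left = 1) | ⟨-, h0, h1⟩) | ⟨-, h⟩) <;> rw [prodHom_mk_eq_one_iff, hprod]
  · simp [h]
  · exact mul_mem h0 h1
  · exact h

end quotient

section extendDomain

variable {p : ι → Prop} [DecidablePred p] (e : κ ≃ Subtype p)

def extendDomainHom : WreathProduct κ K →* WreathProduct ι K where
  toFun w := ⟨fun i => if h : p i then w.left (e.symm ⟨i, h⟩) else 1, w.right.extendDomain e⟩
  map_one' := by ext i <;> simp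
  map_mul' a b := by
    have he (k : κ) : p (e k) := (e k).2
    ext i
    · by_cases h : p i
      · simp [h, he, permAut_apply, Equiv.Perm.extendDomain_apply_subtype]
      · simp [h, permAut_apply, Equiv.Perm.extendDomain_apply_not_subtype]
    · simp

lemma extendDomainHom_left (w : WreathProduct κ K) (i : ι) :
    (extendDomainHom e w).left i = if h : p i then w.left (e.symm ⟨i, h⟩) else 1 := rfl

lemma extendDomainHom_right (w : WreathProduct κ K) :
    (extendDomainHom e w).right = w.right.extendDomain e := rfl

lemma extendDomainHom_injective : Function.Injective (extendDomainHom (K := K) e) := by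
  refine (injective_iff_map_eq_one _).2 fun w hw => ?_
  have hright : w.right = 1 := Equiv.Perm.extendDomain_eq_one_iff.1 (congrArg (·.right) hw)
  have hleft : w.left = 1 := funext fun k => by
    have hk := congrFun (congrArg (·.left) hw) (e k)
    rwa [extendDomainHom_left, dif_pos (e k).2, Subtype.coe_eta, e.symm_apply_apply] at hk
  exact SemidirectProduct.ext hleft hright

lemma mem_range_extendDomainHom_iff (w : WreathProduct ι K) :
    w ∈ (extendDomainHom e).range ↔ ∀ i, ¬ p i → w.left i = 1 ∧ w.right i = i := by
  constructor
  · rintro ⟨v, rfl⟩ i hi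
    exact ⟨dif_neg hi, Equiv.Perm.extendDomain_apply_not_subtype _ _ hi⟩
  · intro hw
    have hp (i : ι) : p (w.right i) ↔ p i := by
      refine ⟨fun h => ?_, fun h => ?_⟩
      · by_contra hi
        exact hi ((hw i hi).2 ▸ h)
      · by_contra hi
        rw [w.right.injective (hw _ hi).2] at hi
        exact hi h
    refine ⟨⟨fun k => w.left (e k), e.symm.permCongr (w.right.subtypePerm hp)⟩,
      SemidirectProduct.ext (funext fun i => ?_) (Equiv.ext fun i => ?_)⟩
    · rw [extendDomainHom_left]
      dsimp only
      split_ifs with h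
      · simp
      · exact ((hw i h).1).symm
    · rw [extendDomainHom_right]
      dsimp only
      by_cases h : p i
      · simp [Equiv.Perm.extendDomain_apply_subtype _ _ h]
      · rw [Equiv.Perm.extendDomain_apply_not_subtype _ _ h, (hw i h).2]

lemma prodHom_comp_extendDomainHom [Fintype ι] [Fintype κ] {A : Type*} [CommMonoid A]
    (f : K →* A) : (prodHom f).comp (extendDomainHom e) = prodHom f := by
  ext w
  simp only [MonoidHom.comp_apply, prodHom_apply, extendDomainHom_left, apply_dite f, map_one,
    Fintype.prod_dite, Finset.prod_const_one, mul_one]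
  exact e.symm.prod_comp fun k => f (w.left k)

end extendDomain

end WreathProduct

lemma mem_wrStab_iff {ρ : K →* (V ≃ₗ[ℂ] V)} {p : ι → V} {P : ι → Prop}
    (hp0 : ∀ i, P i → p i = 0) (hpne : ∀ i, ¬ P i → p i ≠ 0)
    (hpfree : ∀ i, ¬ P i → ∀ k : K, ρ k (p i) = p i → k = 1)
    (hporb : ∀ i j, ¬ P i → ¬ P j → i ≠ j → ∀ k : K, ρ k (p i) ≠ p j)
    (w : WreathProduct ι K) :
    w ∈ wrStab ρ p ↔ ∀ i, ¬ P i → w.left i = 1 ∧ w.right i = i := by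
  have hmem : w ∈ wrStab ρ p ↔ ∀ i, ρ (w.left i) (p (w.right⁻¹ i)) = p i := funext_iff
  rw [hmem]
  constructor
  · intro hw i hi
    have hfix : w.right⁻¹ i = i := by
      by_contra hne
      by_cases hj : P (w.right⁻¹ i)
      · exact hpne i hi (by rw [← hw i, hp0 _ hj, map_zero])
      · exact hporb _ i hj hi hne _ (hw i)
    have hwi := hw i
    rw [hfix] at hwi
    exact ⟨hpfree i hi _ hwi, (Equiv.Perm.inv_eq_iff_eq.1 hfix).symm⟩
  · intro hw i
    by_cases hi : P i
    · have hj : P (w.right⁻¹ i) := by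
        by_contra hj
        have hfix : i = w.right⁻¹ i := (Equiv.Perm.inv_eq_iff_eq.1 rfl).trans (hw _ hj).2
        exact hj (hfix ▸ hi)
      rw [hp0 _ hi, hp0 _ hj, map_zero]
    · rw [Equiv.Perm.inv_eq_iff_eq.2 (hw i hi).2.symm, (hw i hi).1, map_one]
      rfl

theorem stabilizer_isomorphic_G2_general (K : Type*) [Group K] (H : Subgroup K)
    (hcomm : ⁅(⊤ : Subgroup K), (⊤ : Subgroup K)⁆ ≤ H) (n : ℕ) (hn : 3 ≤ n)
    (ρ : K →* ((Fin 2 → ℂ) ≃ₗ[ℂ] (Fin 2 → ℂ)))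
    (Gn : Subgroup (WreathProduct (Fin n) K))
    (hGn : Gn = Subgroup.closure
      ({w | w.left = 1} ∪ {w | w.right = 1 ∧ ∀ i, w.left i ∈ H} ∪
        {w | w.right = 1 ∧ (List.ofFn w.left).prod ∈ H}))
    (G2 : Subgroup (WreathProduct (Fin 2) K))
    (hG2 : G2 = Subgroup.closure
      ({w | w.left = 1} ∪ {w | w.right = 1 ∧ w.left 0 ∈ H ∧ w.left 1 ∈ H} ∪
        {w | w.right = 1 ∧ w.left 0 * w.left 1 ∈ H}))
    (p : Fin n → (Fin 2 → ℂ))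
    (hp0 : ∀ i : Fin n, (i : ℕ) < 2 → p i = 0)
    (hpne : ∀ i : Fin n, 2 ≤ (i : ℕ) → p i ≠ 0)
    (hpfree : ∀ i : Fin n, 2 ≤ (i : ℕ) → ∀ k : K, ρ k (p i) = p i → k = 1)
    (hporb : ∀ i j : Fin n, 2 ≤ (i : ℕ) → 2 ≤ (j : ℕ) → i ≠ j →
      ∀ k : K, ρ k (p i) ≠ p j) :
    Nonempty (↥(Gn ⊓ wrStab ρ p) ≃* ↥G2) := by
  open WreathProduct IsMulCommutative in
  have := Subgroup.Normal.of_commutator_le K hcomm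
  have := Subgroup.Normal.quotient_commutative_iff_commutator_le.2 hcomm
  let e := (Fin.castLEOrderIso (show 2 ≤ n by omega)).toEquiv
  have hstab : wrStab ρ p = (extendDomainHom (K := K) e).range := by
    ext w
    rw [mem_wrStab_iff hp0 (fun i hi => hpne i (not_lt.1 hi))
      (fun i hi => hpfree i (not_lt.1 hi))
      (fun i j hi hj => hporb i j (not_lt.1 hi) (not_lt.1 hj)), mem_range_extendDomainHom_iff]
  have hmap : G2.map (extendDomainHom e) = Gn ⊓ wrStab ρ p := by
    rw [hGn, hG2, closure_eq_ker_prodHom_mk, closure_eq_ker_prodHom_mk_two, hstab,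
      ← prodHom_comp_extendDomainHom e, ← MonoidHom.comap_ker, Subgroup.map_comap_eq, inf_comm]
  exact ⟨((G2.equivMapOfInjective _ (extendDomainHom_injective e)).trans
    (MulEquiv.subgroupCongr hmap)).symm⟩

/-- For `n ≥ 3` and `G = G_n(K,H) ≤ K ≀ S_n` acting on `(ℂ²)ⁿ` via a faithful
2-dimensional representation of `K`, the stabilizer of a point `p = (0,0,p₃,…,p_n)` with the
`pᵢ` nonzero, in pairwise distinct free `K`-orbits, is isomorphic to `G₂(K,H) = G(K,H,id)`. -/
theorem stabilizer_isomorphic_G2 (K : Type*) [Group K] [Finite K] (H : Subgroup K)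
    (hcomm : ⁅(⊤ : Subgroup K), (⊤ : Subgroup K)⁆ ≤ H) (n : ℕ) (hn : 3 ≤ n)
    (ρ : K →* ((Fin 2 → ℂ) ≃ₗ[ℂ] (Fin 2 → ℂ))) (hρ : Function.Injective ρ)
    (Gn : Subgroup (WreathProduct (Fin n) K))
    (hGn : Gn = Subgroup.closure
      ({w | w.left = 1} ∪ {w | w.right = 1 ∧ ∀ i, w.left i ∈ H} ∪
        {w | w.right = 1 ∧ (List.ofFn w.left).prod ∈ H}))
    (G2 : Subgroup (WreathProduct (Fin 2) K))
    (hG2 : G2 = Subgroup.closure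
      ({w | w.left = 1} ∪ {w | w.right = 1 ∧ w.left 0 ∈ H ∧ w.left 1 ∈ H} ∪
        {w | w.right = 1 ∧ w.left 0 * w.left 1 ∈ H}))
    (p : Fin n → (Fin 2 → ℂ))
    (hp0 : ∀ i : Fin n, (i : ℕ) < 2 → p i = 0)
    (hpne : ∀ i : Fin n, 2 ≤ (i : ℕ) → p i ≠ 0)
    (hpfree : ∀ i : Fin n, 2 ≤ (i : ℕ) → ∀ k : K, ρ k (p i) = p i → k = 1)
    (hporb : ∀ i j : Fin n, 2 ≤ (i : ℕ) → 2 ≤ (j : ℕ) → i ≠ j →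
      ∀ k : K, ρ k (p i) ≠ p j) :
    Nonempty (↥(Gn ⊓ wrStab ρ p) ≃* ↥G2) :=
  stabilizer_isomorphic_G2_general K H hcomm n hn ρ Gn hGn G2 hG2 p hp0 hpne hpfree hporb
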